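/- arXiv:2207.04811 — 2 statements merged into one kernel-verified Lean document; each statement's English description precedes it below -/
import Mathlib

section
/- Identify the spinor space with Λ*(ℝ^n)* via c(e_i) = ε(e^i) - ι(e_i), and define the rescaled action c_t(e_i) = t^{-1/2} ε(e^i) - t^{1/2} ι(e_i) on Λ*(ℝ^n)*. Then for a strictly increasing multi-index I = (i_1 < ⋯ < i_k), lim_{t→0} t^{n/2} c_t(e_{i_1})⋯c_t(e_{i_k}) = 0 if k < n, and equals ε(e^1∧⋯∧e^n), the operator of left exterior multiplication by the volume form (sending 1 to e^1∧⋯∧e^n and vanishing on positive-degree forms), if I = (1,2,…,n). -/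
open Filter Set

/-- Exterior multiplication `ε(e^i)` by the `i`-th basis covector on `Λ*(ℝⁿ)*`, in the
model where `Λ*(ℝⁿ)*` has basis indexed by subsets of `{1,…,n}`. -/
noncomputable def extMul {n : ℕ} (i : Fin n) :
    (Finset (Fin n) → ℝ) →ₗ[ℝ] (Finset (Fin n) → ℝ) where
  toFun f S :=
    if i ∈ S then (-1 : ℝ) ^ ((S.filter fun j => j < i).card) * f (S.erase i) else 0
  map_add' f g := by
    funext S; by_cases h : i ∈ S <;> simp [h, mul_add]
  map_smul' c f := by
    funext S; by_cases h : i ∈ S <;> simp [h, smul_eq_mul] <;> ring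

/-- Contraction `ι(e_i)` with the `i`-th basis vector on `Λ*(ℝⁿ)*`. -/
noncomputable def contr {n : ℕ} (i : Fin n) :
    (Finset (Fin n) → ℝ) →ₗ[ℝ] (Finset (Fin n) → ℝ) where
  toFun f S :=
    if i ∈ S then 0 else (-1 : ℝ) ^ ((S.filter fun j => j < i).card) * f (insert i S)
  map_add' f g := by
    funext S; by_cases h : i ∈ S <;> simp [h, mul_add]
  map_smul' c f := by
    funext S; by_cases h : i ∈ S <;> simp [h, smul_eq_mul] <;> ring

/-- The Getzler-rescaled Clifford action `c_t(e_i) = t^{-1/2} ε(e^i) - t^{1/2} ι(e_i)`. -/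
noncomputable def cliffT {n : ℕ} (t : ℝ) (i : Fin n) :
    (Finset (Fin n) → ℝ) →ₗ[ℝ] (Finset (Fin n) → ℝ) :=
  t ^ (-(1/2 : ℝ)) • extMul i - t ^ ((1/2 : ℝ)) • contr i

lemma ofFn_smul_prod {M : Type*} [AddCommGroup M] [Module ℝ M] (c : ℝ) :
    ∀ (k : ℕ) (A : Fin k → (M →ₗ[ℝ] M)),
      (List.ofFn fun m => c • A m).prod = c ^ k • (List.ofFn A).prod := by
  intro k
  induction k with
  | zero => intro A; simp
  | succ k ih =>
    intro A
    rw [List.ofFn_succ, List.ofFn_succ, List.prod_cons, List.prod_cons,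
      ih fun m => A m.succ, smul_mul_assoc, mul_smul_comm, smul_smul, pow_succ']

lemma cliffT_eq {n : ℕ} {t : ℝ} (ht : 0 < t) (i : Fin n) :
    cliffT t i = t ^ (-(1/2) : ℝ) • (extMul i - t • contr i) := by
  unfold cliffT
  rw [smul_sub, smul_smul]
  congr 2
  rw [← Real.rpow_add_one (ne_of_gt ht)]
  norm_num

lemma cliff_prod_eq {n : ℕ} {t : ℝ} (ht : 0 < t) (k : ℕ) (g : Fin k → Fin n) :
    (List.ofFn fun m => cliffT t (g m)).prod =
      (t ^ (-(1/2) : ℝ)) ^ k • (List.ofFn fun m => extMul (g m) - t • contr (g m)).prod := by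
  rw [← ofFn_smul_prod]
  exact congrArg (fun l => List.prod l)
    (congrArg List.ofFn (funext fun m => cliffT_eq ht (g m)))

lemma rpow_key {t : ℝ} (ht : 0 < t) (n k : ℕ) :
    t ^ ((n : ℝ) / 2) * (t ^ (-(1/2) : ℝ)) ^ k = t ^ (((n : ℝ) - k) / 2) := by
  rw [← Real.rpow_natCast (t ^ (-(1/2) : ℝ)) k, ← Real.rpow_mul ht.le,
    ← Real.rpow_add ht]
  congr 1
  ring

lemma cont_Q {n : ℕ} : ∀ (k : ℕ) (g : Fin k → Fin n) (f : Finset (Fin n) → ℝ)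
    (S : Finset (Fin n)),
    Continuous (fun t : ℝ =>
      ((List.ofFn fun m => extMul (g m) - t • contr (g m)).prod f) S) := by
  intro k
  induction k with
  | zero => intro g f S; simp only [List.ofFn_zero, List.prod_nil, Module.End.one_apply]
            exact continuous_const
  | succ k ih =>
    intro g f S
    have h : ∀ t : ℝ, ((List.ofFn fun m : Fin (k+1) => extMul (g m) - t • contr (g m)).prod f) S =
        extMul (g 0) ((List.ofFn fun m : Fin k => extMul (g m.succ) - t • contr (g m.succ)).prod f) S
        - t * contr (g 0) ((List.ofFn fun m : Fin k => extMul (g m.succ) - t • contr (g m.succ)).prod f) S := by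
      intro t
      rw [List.ofFn_succ, List.prod_cons]
      simp [LinearMap.sub_apply, Module.End.mul_apply]
    simp only [h]
    apply Continuous.sub
    · have e1 : ∀ t : ℝ, extMul (g 0)
          ((List.ofFn fun m : Fin k => extMul (g m.succ) - t • contr (g m.succ)).prod f) S =
          if g 0 ∈ S then (-1 : ℝ) ^ ((S.filter fun j => j < g 0).card) *
            ((List.ofFn fun m : Fin k => extMul (g m.succ) - t • contr (g m.succ)).prod f)
              (S.erase (g 0)) else 0 := fun t => rfl
      simp only [e1]
      split_ifs
      · exact continuous_const.mul (ih _ f _)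
      · exact continuous_const
    · apply continuous_id.mul
      have e2 : ∀ t : ℝ, contr (g 0)
          ((List.ofFn fun m : Fin k => extMul (g m.succ) - t • contr (g m.succ)).prod f) S =
          if g 0 ∈ S then 0 else (-1 : ℝ) ^ ((S.filter fun j => j < g 0).card) *
            ((List.ofFn fun m : Fin k => extMul (g m.succ) - t • contr (g m.succ)).prod f)
              (insert (g 0) S) := fun t => rfl
      simp only [e2]
      split_ifs
      · exact continuous_const
      · exact continuous_const.mul (ih _ f _)

lemma extMul_prod {n : ℕ} : ∀ (k : ℕ) (hk : k ≤ n) (f : Finset (Fin n) → ℝ)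
    (S : Finset (Fin n)),
    ((List.ofFn fun m : Fin k => extMul (⟨m.1, lt_of_lt_of_le m.2 hk⟩ : Fin n)).prod f) S =
      if ∀ i : Fin n, i.1 < k → i ∈ S then f (S.filter fun i => k ≤ i.1) else 0 := by
  intro k
  induction k with
  | zero =>
    intro hk f S
    simp
  | succ k ih =>
    intro hk f S
    rw [List.ofFn_succ', List.concat_eq_append, List.prod_append, List.prod_cons,
      List.prod_nil, mul_one]
    have hek : ((List.ofFn fun m : Fin k =>
        extMul (⟨(m.castSucc).1, lt_of_lt_of_le (m.castSucc).2 hk⟩ : Fin n))) =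
        List.ofFn fun m : Fin k => extMul (⟨m.1, lt_of_lt_of_le m.2 (le_of_lt hk)⟩ : Fin n) := by
      rfl
    rw [Module.End.mul_apply, hek, ih (le_of_lt hk)]
    simp only [Fin.val_last]
    set j : Fin n := ⟨k, hk⟩ with hj
    have hjk : (j : ℕ) = k := rfl
    have e : extMul j f (S.filter fun i => k ≤ i.1) =
        if j ∈ (S.filter fun i => k ≤ i.1) then
          (-1:ℝ) ^ (((S.filter fun i => k ≤ i.1).filter fun x => x < j).card) *
            f (((S.filter fun i => k ≤ i.1)).erase j) else 0 := rfl
    rw [e]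
    have hmem : j ∈ (S.filter fun i => k ≤ i.1) ↔ j ∈ S := by
      simp [Finset.mem_filter, hj]
    have hfil : ((S.filter fun i => k ≤ i.1).filter fun x => x < j) = ∅ := by
      ext x
      simp only [Finset.mem_filter, Finset.notMem_empty, iff_false, not_and]
      intro ⟨_, hx1⟩ hx2
      rw [Fin.lt_def] at hx2
      omega
    have herase : (S.filter fun i => k ≤ i.1).erase j = S.filter fun i => k+1 ≤ i.1 := by
      ext x
      simp only [Finset.mem_erase, Finset.mem_filter, Fin.ext_iff, hjk, ne_eq]
      constructor
      · rintro ⟨hne, hxS, hge⟩; exact ⟨hxS, by omega⟩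
      · rintro ⟨hxS, hge⟩; exact ⟨by omega, hxS, by omega⟩
    rw [hfil, herase]
    simp only [Finset.card_empty, pow_zero, one_mul, hmem]
    have hcond : (∀ i : Fin n, i.1 < k+1 → i ∈ S) ↔
        (∀ i : Fin n, i.1 < k → i ∈ S) ∧ j ∈ S := by
      constructor
      · intro h
        exact ⟨fun i hi => h i (by omega), h j (by omega)⟩
      · rintro ⟨h1, h2⟩ i hi
        rcases Nat.lt_or_ge i.1 k with h | h
        · exact h1 i h
        · have : i = j := by apply Fin.ext; omega
          rwa [this]
    by_cases h1 : ∀ i : Fin n, i.1 < k → i ∈ S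
    · by_cases h2 : j ∈ S
      · rw [if_pos h1, if_pos h2, if_pos (hcond.mpr ⟨h1, h2⟩)]
      · rw [if_pos h1, if_neg h2, if_neg (fun h => h2 (hcond.mp h).2)]
    · rw [if_neg h1, if_neg (fun h => h1 (hcond.mp h).1)]

/-- Getzler rescaling kills lower-order Clifford monomials: for a strictly increasing
multi-index `I = (i_1 < ⋯ < i_k)`, `t^{n/2} c_t(e_{i_1})⋯c_t(e_{i_k}) → 0` as `t → 0⁺`
when `k < n`, while for `I = (1,…,n)` the limit is the operator sending `1` to
`e^1 ∧ ⋯ ∧ e^n` and vanishing on positive-degree forms. -/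
theorem stmt8 {n : ℕ} :
    (∀ (k : ℕ), k < n → ∀ ι : Fin k → Fin n, StrictMono ι →
      ∀ f : Finset (Fin n) → ℝ,
        Tendsto (fun t : ℝ =>
            t ^ ((n : ℝ) / 2) • (List.ofFn fun m => cliffT t (ι m)).prod f)
          (nhdsWithin 0 (Ioi 0)) (nhds 0)) ∧
    (∀ f : Finset (Fin n) → ℝ,
      Tendsto (fun t : ℝ =>
          t ^ ((n : ℝ) / 2) • (List.ofFn fun m : Fin n => cliffT t m).prod f)
        (nhdsWithin 0 (Ioi 0))
        (nhds fun S => if S = Finset.univ then f ∅ else 0)) := by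
  constructor
  · intro k hk g _ f
    rw [tendsto_pi_nhds]
    intro S
    have key : ∀ t ∈ Ioi (0:ℝ),
        t ^ (((n : ℝ) - k) / 2) *
          ((List.ofFn fun m => extMul (g m) - t • contr (g m)).prod f) S =
        (t ^ ((n:ℝ)/2) • (List.ofFn fun m => cliffT t (g m)).prod f) S := by
      intro t ht
      rw [cliff_prod_eq ht k g]
      simp only [LinearMap.smul_apply, Pi.smul_apply, smul_eq_mul]
      rw [← mul_assoc, rpow_key ht]
    have he : (0:ℝ) < ((n : ℝ) - k) / 2 := by
      have : (k : ℝ) < n := by exact_mod_cast hk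
      linarith
    have h1 : Tendsto (fun t : ℝ => t ^ (((n : ℝ) - k) / 2))
        (nhdsWithin 0 (Ioi 0)) (nhds 0) := by
      have hc := (Real.continuousAt_rpow_const 0 (((n : ℝ) - k) / 2)
        (Or.inr he.le)).tendsto
      rw [Real.zero_rpow (ne_of_gt he)] at hc
      exact hc.mono_left nhdsWithin_le_nhds
    have h2 : Tendsto (fun t : ℝ =>
        ((List.ofFn fun m => extMul (g m) - t • contr (g m)).prod f) S)
        (nhdsWithin 0 (Ioi 0))
        (nhds (((List.ofFn fun m => extMul (g m) - (0:ℝ) • contr (g m)).prod f) S)) :=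
      ((cont_Q k g f S).tendsto 0).mono_left nhdsWithin_le_nhds
    have h3 := h1.mul h2
    rw [zero_mul] at h3
    have : (0:ℝ) = (0 : Finset (Fin n) → ℝ) S := rfl
    rw [this] at h3
    exact h3.congr' (eventually_mem_nhdsWithin.mono fun t ht => key t ht)
  · intro f
    rw [tendsto_pi_nhds]
    intro S
    have key : ∀ t ∈ Ioi (0:ℝ),
        ((List.ofFn fun m : Fin n => extMul m - t • contr m).prod f) S =
        (t ^ ((n:ℝ)/2) • (List.ofFn fun m : Fin n => cliffT t m).prod f) S := by
      intro t ht
      rw [cliff_prod_eq ht n (fun m => m)]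
      simp only [LinearMap.smul_apply, Pi.smul_apply, smul_eq_mul]
      rw [← mul_assoc, rpow_key ht]
      norm_num
    have h2 : Tendsto (fun t : ℝ =>
        ((List.ofFn fun m : Fin n => extMul m - t • contr m).prod f) S)
        (nhdsWithin 0 (Ioi 0))
        (nhds (((List.ofFn fun m : Fin n => extMul m - (0:ℝ) • contr m).prod f) S)) :=
      ((cont_Q n id f S).tendsto 0).mono_left nhdsWithin_le_nhds
    have hval : ((List.ofFn fun m : Fin n => extMul m - (0:ℝ) • contr m).prod f) S =
        if S = Finset.univ then f ∅ else 0 := by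
      have hl : (List.ofFn fun m : Fin n => extMul m - (0:ℝ) • contr m) =
          List.ofFn fun m : Fin n => extMul (⟨m.1, lt_of_lt_of_le m.2 le_rfl⟩ : Fin n) := by
        simp
      rw [hl, extMul_prod n le_rfl f S]
      have hc : (∀ i : Fin n, i.1 < n → i ∈ S) ↔ S = Finset.univ := by
        rw [Finset.eq_univ_iff_forall]
        exact ⟨fun h i => h i i.2, fun h i _ => h i⟩
      have hf : (S.filter fun i => n ≤ i.1) = ∅ := by
        ext x
        simp only [Finset.mem_filter, Finset.notMem_empty, iff_false, not_and]
        intro _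
        omega
      rw [hf]
      by_cases h : S = Finset.univ
      · rw [if_pos (hc.mpr h), if_pos h]
      · rw [if_neg (fun hh => h (hc.mp hh)), if_neg h]
    rw [hval] at h2
    exact h2.congr' (eventually_mem_nhdsWithin.mono fun t ht => key t ht)
end

section
/- Sobolev norm interpolation for perturbed Dirac operators: let D₀ and D₁ = D₀ + rB be first-order operators where B is a bounded (order-zero) operator, r ≥ 1, and suppose the Sobolev norms satisfy ‖σ‖_{H^1} ≤ C₁(‖D₁σ‖_{L²} + r‖σ‖_{L²}) for all σ, and that [B, D₀^m] is a differential operator of order ≤ m with ‖[B, D₀^m]σ‖_{L²} ≤ C‖σ‖_{H^m}. Then for every m there exists C_m such that ‖σ‖_{H^m} ≤ C_m Σ_{j=0}^m r^{m-j} ‖D₁^j σ‖_{L²}. -/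
/-!
Applying the first-order estimate to `D₀^i σ` for `i ≤ m` and summing gives
`‖σ‖_{m+1} ≤ C₁ (‖D₁σ‖_m + ((m+1)C + 1) r ‖σ‖_m)`: commuting `D₁ = D₀ + rB` past `D₀^i`
costs `r [B, D₀^i] σ`, which is bounded by `r C ‖σ‖_m`. Both `‖D₁σ‖_m` and `r ‖σ‖_m` are controlled
by the induction hypothesis, since shifting the weighted sum `Σ_j r^{m-j} ‖D₁^j ·‖` by one power of
`D₁`, or multiplying it by `r`, yields part of the same sum at level `m + 1`.
-/

open Finset

/-- The `m`-th Sobolev norm of the scale defined by powers of `D₀`: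
`‖σ‖_m = Σ_{i=0}^m ‖D₀^i σ‖`. -/
noncomputable def sobNorm {X : Type*} [NormedAddCommGroup X] [NormedSpace ℝ X]
    (D₀ : X →ₗ[ℝ] X) (m : ℕ) (σ : X) : ℝ :=
  ∑ i ∈ Finset.range (m + 1), ‖(D₀ ^ i) σ‖

noncomputable def powNormSum {X : Type*} [NormedAddCommGroup X] [NormedSpace ℝ X]
    (T : X →ₗ[ℝ] X) (r : ℝ) (m : ℕ) (σ : X) : ℝ :=
  ∑ j ∈ range (m + 1), r ^ (m - j) * ‖(T ^ j) σ‖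

theorem Module.End.apply_pow_apply {R M : Type*} [Semiring R] [AddCommMonoid M] [Module R M]
    (D : Module.End R M) (i : ℕ) (x : M) : D ((D ^ i) x) = (D ^ i) (D x) :=
  LinearMap.congr_fun (Commute.self_pow D i).eq x

theorem Module.End.add_smul_apply_pow_apply {R M : Type*} [CommRing R] [AddCommGroup M]
    [Module R M] (D B : Module.End R M) (r : R) (i : ℕ) (x : M) :
    (D + r • B) ((D ^ i) x) = (D ^ i) ((D + r • B) x) + r • (B * D ^ i - D ^ i * B) x := by
  simp only [LinearMap.add_apply, LinearMap.smul_apply, LinearMap.sub_apply,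
    Module.End.mul_apply, map_add, map_smul, Module.End.apply_pow_apply]
  module

section

variable {X : Type*} [NormedAddCommGroup X] [NormedSpace ℝ X]

theorem sobNorm_zero (D₀ : X →ₗ[ℝ] X) (σ : X) : sobNorm D₀ 0 σ = ‖σ‖ := by
  simp [sobNorm]

theorem sobNorm_one (D₀ : X →ₗ[ℝ] X) (σ : X) : sobNorm D₀ 1 σ = ‖σ‖ + ‖D₀ σ‖ := by
  simp [sobNorm, Finset.sum_range_succ]

theorem sobNorm_succ (D₀ : X →ₗ[ℝ] X) (m : ℕ) (σ : X) :
    sobNorm D₀ (m + 1) σ = ‖σ‖ + sobNorm D₀ m (D₀ σ) := by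
  simp only [sobNorm, Finset.sum_range_succ' _ (m + 1), pow_succ, Module.End.mul_apply, pow_zero,
    Module.End.one_apply]
  ring

theorem norm_le_sobNorm (D₀ : X →ₗ[ℝ] X) (m : ℕ) (σ : X) : ‖σ‖ ≤ sobNorm D₀ m σ := by
  simpa [sobNorm] using Finset.single_le_sum (f := fun i => ‖(D₀ ^ i) σ‖)
    (fun _ _ => norm_nonneg _) (Finset.mem_range.2 m.succ_pos)

theorem sobNorm_mono (D₀ : X →ₗ[ℝ] X) {m n : ℕ} (h : m ≤ n) (σ : X) :
    sobNorm D₀ m σ ≤ sobNorm D₀ n σ :=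
  Finset.sum_le_sum_of_subset_of_nonneg (Finset.range_subset_range.2 (by omega))
    (fun _ _ _ => norm_nonneg _)

theorem sobNorm_succ_le_sum_sobNorm_one (D₀ : X →ₗ[ℝ] X) (m : ℕ) (σ : X) :
    sobNorm D₀ (m + 1) σ ≤ ∑ i ∈ range (m + 1), sobNorm D₀ 1 ((D₀ ^ i) σ) := by
  have hsum : ∑ i ∈ range (m + 1), sobNorm D₀ 1 ((D₀ ^ i) σ)
      = sobNorm D₀ m σ + sobNorm D₀ m (D₀ σ) := by
    simp only [sobNorm_one, Module.End.apply_pow_apply, Finset.sum_add_distrib]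
    rfl
  rw [hsum, sobNorm_succ]
  linarith [norm_le_sobNorm D₀ m σ]

theorem powNormSum_succ_eq_apply (T : X →ₗ[ℝ] X) (r : ℝ) (m : ℕ) (σ : X) :
    powNormSum T r (m + 1) σ = powNormSum T r m (T σ) + r ^ (m + 1) * ‖σ‖ := by
  simp only [powNormSum, Finset.sum_range_succ' _ (m + 1), pow_succ, Module.End.mul_apply,
    Nat.add_sub_add_right, Nat.sub_zero, pow_zero, Module.End.one_apply]

theorem powNormSum_succ_eq_mul (T : X →ₗ[ℝ] X) (r : ℝ) (m : ℕ) (σ : X) :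
    powNormSum T r (m + 1) σ = r * powNormSum T r m σ + ‖(T ^ (m + 1)) σ‖ := by
  rw [powNormSum, Finset.sum_range_succ, powNormSum, Finset.mul_sum, Nat.sub_self, pow_zero,
    one_mul]
  congr 1
  refine Finset.sum_congr rfl fun j hj => ?_
  rw [← mul_assoc, ← pow_succ', Nat.sub_add_comm (Finset.mem_range_succ_iff.1 hj)]

theorem norm_add_smul_apply_pow_apply_le (D₀ B : X →ₗ[ℝ] X) {r C : ℝ} (hr : 0 ≤ r) (hC : 0 ≤ C)
    (hcomm : ∀ (m : ℕ) (σ : X), ‖(B * D₀ ^ m - D₀ ^ m * B) σ‖ ≤ C * sobNorm D₀ m σ)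
    {i m : ℕ} (hi : i ≤ m) (σ : X) :
    ‖(D₀ + r • B) ((D₀ ^ i) σ)‖ ≤ ‖(D₀ ^ i) ((D₀ + r • B) σ)‖ + r * (C * sobNorm D₀ m σ) := by
  rw [Module.End.add_smul_apply_pow_apply]
  refine (norm_add_le _ _).trans ?_
  rw [norm_smul, Real.norm_of_nonneg hr]
  gcongr
  exact (hcomm i σ).trans (by gcongr; exact sobNorm_mono D₀ hi σ)

theorem sobNorm_succ_le (D₀ B : X →ₗ[ℝ] X) {r C₁ C : ℝ} (hr : 0 ≤ r) (hC₁ : 0 ≤ C₁)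
    (hC : 0 ≤ C) (h1 : ∀ σ, sobNorm D₀ 1 σ ≤ C₁ * (‖(D₀ + r • B) σ‖ + r * ‖σ‖))
    (hcomm : ∀ (m : ℕ) (σ : X), ‖(B * D₀ ^ m - D₀ ^ m * B) σ‖ ≤ C * sobNorm D₀ m σ)
    (m : ℕ) (σ : X) :
    sobNorm D₀ (m + 1) σ ≤
      C₁ * (sobNorm D₀ m ((D₀ + r • B) σ) + ((m + 1) * C + 1) * (r * sobNorm D₀ m σ)) := by
  calc sobNorm D₀ (m + 1) σ
      ≤ ∑ i ∈ range (m + 1), sobNorm D₀ 1 ((D₀ ^ i) σ) := sobNorm_succ_le_sum_sobNorm_one D₀ m σ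
    _ ≤ ∑ i ∈ range (m + 1), C₁ * (‖(D₀ ^ i) ((D₀ + r • B) σ)‖
          + r * (C * sobNorm D₀ m σ) + r * ‖(D₀ ^ i) σ‖) := by
        refine Finset.sum_le_sum fun i hi => (h1 _).trans ?_
        gcongr
        exact norm_add_smul_apply_pow_apply_le D₀ B hr hC hcomm (Finset.mem_range_succ_iff.1 hi) σ
    _ = C₁ * (sobNorm D₀ m ((D₀ + r • B) σ) + ((m + 1) * C + 1) * (r * sobNorm D₀ m σ)) := by
        simp only [← Finset.mul_sum, Finset.sum_add_distrib, Finset.sum_const, Finset.card_range,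
          nsmul_eq_mul, sobNorm]
        push_cast
        ring

end

theorem stmt15_general {X : Type*} [NormedAddCommGroup X] [NormedSpace ℝ X]
    (D₀ B : X →ₗ[ℝ] X) (r : ℝ) (hr : 1 ≤ r)
    (C₁ C : ℝ) (hC₁ : 0 < C₁) (hC : 0 < C)
    (h1 : ∀ σ, sobNorm D₀ 1 σ ≤ C₁ * (‖(D₀ + r • B) σ‖ + r * ‖σ‖))
    (hcomm : ∀ (m : ℕ) (σ : X), ‖(B * D₀ ^ m - D₀ ^ m * B) σ‖ ≤ C * sobNorm D₀ m σ) :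
    ∀ m : ℕ, ∃ Cm : ℝ, 0 < Cm ∧ ∀ σ : X,
      sobNorm D₀ m σ ≤
        Cm * ∑ j ∈ Finset.range (m + 1), r ^ (m - j) * ‖((D₀ + r • B) ^ j) σ‖ := by
  have hr₀ : 0 ≤ r := zero_le_one.trans hr
  set D₁ := D₀ + r • B
  intro m
  change ∃ Cm : ℝ, 0 < Cm ∧ ∀ σ, sobNorm D₀ m σ ≤ Cm * powNormSum D₁ r m σ
  induction m with
  | zero => exact ⟨1, one_pos, fun σ => by simp [sobNorm_zero, powNormSum]⟩
  | succ m ih =>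
    obtain ⟨Cm, hCm, hle⟩ := ih
    refine ⟨C₁ * ((m + 1) * C + 2) * Cm, by positivity, fun σ => ?_⟩
    have happly : sobNorm D₀ m (D₁ σ) ≤ Cm * powNormSum D₁ r (m + 1) σ := by
      refine (hle (D₁ σ)).trans ?_
      rw [powNormSum_succ_eq_apply]
      gcongr
      exact le_add_of_nonneg_right (by positivity)
    have hmul : r * sobNorm D₀ m σ ≤ Cm * powNormSum D₁ r (m + 1) σ := by
      calc r * sobNorm D₀ m σ ≤ r * (Cm * powNormSum D₁ r m σ) := by gcongr; exact hle σ
        _ ≤ Cm * powNormSum D₁ r (m + 1) σ := by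
          rw [powNormSum_succ_eq_mul, mul_left_comm]
          gcongr
          exact le_add_of_nonneg_right (norm_nonneg _)
    calc sobNorm D₀ (m + 1) σ
        ≤ C₁ * (sobNorm D₀ m (D₁ σ) + ((m + 1) * C + 1) * (r * sobNorm D₀ m σ)) :=
          sobNorm_succ_le D₀ B hr₀ hC₁.le hC.le h1 hcomm m σ
      _ ≤ C₁ * (Cm * powNormSum D₁ r (m + 1) σ
            + ((m + 1) * C + 1) * (Cm * powNormSum D₁ r (m + 1) σ)) := by gcongr
      _ = C₁ * ((m + 1) * C + 2) * Cm * powNormSum D₁ r (m + 1) σ := by ring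

/-- Sobolev norm interpolation for the perturbed Dirac operator `D₁ = D₀ + r B`:
if `‖σ‖₁ ≤ C₁(‖D₁σ‖ + r‖σ‖)`, `B` is bounded, and each commutator `[B, D₀^m]` is of
order `≤ m`, then for every `m` there is `C_m` with
`‖σ‖_m ≤ C_m Σ_{j=0}^m r^{m-j} ‖D₁^j σ‖`. -/
theorem stmt15 {X : Type*} [NormedAddCommGroup X] [NormedSpace ℝ X]
    (D₀ B : X →ₗ[ℝ] X) (r : ℝ) (hr : 1 ≤ r)
    (C₁ C : ℝ) (hC₁ : 0 < C₁) (hC : 0 < C)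
    (hB : ∀ σ, ‖B σ‖ ≤ C * ‖σ‖)
    (h1 : ∀ σ, sobNorm D₀ 1 σ ≤ C₁ * (‖(D₀ + r • B) σ‖ + r * ‖σ‖))
    (hcomm : ∀ (m : ℕ) (σ : X), ‖(B * D₀ ^ m - D₀ ^ m * B) σ‖ ≤ C * sobNorm D₀ m σ) :
    ∀ m : ℕ, ∃ Cm : ℝ, 0 < Cm ∧ ∀ σ : X,
      sobNorm D₀ m σ ≤
        Cm * ∑ j ∈ Finset.range (m + 1), r ^ (m - j) * ‖((D₀ + r • B) ^ j) σ‖ :=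
  stmt15_general D₀ B r hr C₁ C hC₁ hC h1 hcomm
end
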